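/- Let N be a directed network with n vertices, integral edge capacities, a source s and a sink t, and suppose every edge capacity is at most k. Construct the network N* where each vertex v is replaced by sets of in-copies v_in(e,i) for each incoming edge e and i ∈ {1,...,capacity(e)}, and out-copies v_out(e',i') for each outgoing edge e', with an edge from every in-copy to every out-copy of v, and for each original edge e = (v,w) edges from v_out(e,i) to w_in(e,i); X consists of k new vertices each connected to all out-copies of s, and Y of k new vertices each reached from all in-copies of t. Then there is an integral flow of value k from s to t in N (routing each unit along a simple path) if and only if there are k pairwise vertex-disjoint simple directed paths connecting X to Y in N*. -/

import Mathlib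

set_option autoImplicit false

open scoped Classical

noncomputable section

variable {V : Type*}

/-- The vertices of the gadget network `N*`: copies `((v, e, i), b)` of a
vertex `v` of `N` (`b = false` for in-copies `v_in(e,i)`, `b = true` for
out-copies `v_out(e,i)`), together with `k` new source vertices (`Sum.inr
(Sum.inl _)`, the set `X`) and `k` new sink vertices (`Sum.inr (Sum.inr _)`,
the set `Y`). -/
def VStar (V : Type*) (k : ℕ) : Type _ := ((V × (V × V) × ℕ) × Bool) ⊕ (Fin k ⊕ Fin k)

/-- The edges of the gadget network `N*` built from the network `(E, cap)`
with source `s` and sink `t`: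
* from every in-copy of `v` to every out-copy of `v`;
* for each edge `e = (v, w)` and `i < cap e`, from `v_out(e, i)` to `w_in(e, i)`;
* from every new source vertex to every out-copy of `s`;
* from every in-copy of `t` to every new sink vertex. -/
def EStar (E : V → V → Prop) (cap : V × V → ℕ) (s t : V) (k : ℕ) :
    VStar V k → VStar V k → Prop
  | Sum.inl ((v, e, i), false), Sum.inl ((v', e', i'), true) =>
      v' = v ∧ e.2 = v ∧ E e.1 e.2 ∧ i < cap e ∧ e'.1 = v ∧ E e'.1 e'.2 ∧ i' < cap e'
  | Sum.inl ((v, e, i), true), Sum.inl ((v', e', i'), false) =>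
      e' = e ∧ e.1 = v ∧ e.2 = v' ∧ E e.1 e.2 ∧ i' = i ∧ i < cap e
  | Sum.inr (Sum.inl _), Sum.inl ((v, e, _i), true) =>
      v = s ∧ e.1 = s ∧ E e.1 e.2 ∧ _i < cap e
  | Sum.inl ((v, e, _i), false), Sum.inr (Sum.inr _) =>
      v = t ∧ e.2 = t ∧ E e.1 e.2 ∧ _i < cap e
  | _, _ => False

/-- The new source set `X` of `N*`. -/
def XStar (V : Type*) (k : ℕ) : Set (VStar V k) :=
  {u | ∃ a : Fin k, u = Sum.inr (Sum.inl a)}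

/-- The new sink set `Y` of `N*`. -/
def YStar (V : Type*) (k : ℕ) : Set (VStar V k) :=
  {u | ∃ b : Fin k, u = Sum.inr (Sum.inr b)}

/-- A set of `k` pairwise vertex-disjoint simple directed paths connecting `X`
to `Y`. -/
def IsPathSys {W : Type*} (E : W → W → Prop) (X Y : Set W) (k : ℕ)
    (P : Finset (List W)) : Prop :=
  P.card = k ∧
    (∀ w ∈ P, w ≠ [] ∧ w.Chain' E ∧ w.Nodup ∧
      (∀ a, w.head? = some a → a ∈ X) ∧ (∀ b, w.getLast? = some b → b ∈ Y)) ∧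
    ∀ w ∈ P, ∀ w' ∈ P, w ≠ w' → ∀ v, v ∈ w → v ∉ w'

/-!
A unit of flow along a simple path `v₀ v₁ … v_m` that uses edge `e_l = (v_{l-1}, v_l)` in
capacity slot `i_l < cap e_l` becomes the `N*`-path
`x, v₀_out(e₁,i₁), v₁_in(e₁,i₁), …, v_{m-1}_out(e_m,i_m), v_m_in(e_m,i_m), y`.
Since at most `cap e` units use `e`, different units can be given different slots on every
edge, and then their `N*`-paths are vertex-disjoint. Conversely every `X`–`Y` path of `N*` has
exactly this shape, so it projects to an `s`–`t` walk of `N`, which shortcuts to a simple path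
using each edge at most as often; each use of `e = (v, w)` is paid for by a distinct in-copy
`w_in(e,i)`, and vertex-disjointness leaves only `cap e` of these for all paths together.
-/

attribute [reducible] VStar

namespace List

variable {α : Type*}

@[simp] theorem consecutivePairs_singleton (a : α) : [a].consecutivePairs = [] := rfl

@[simp] theorem consecutivePairs_cons_cons (a b : α) (l : List α) :
    (a :: b :: l).consecutivePairs = (a, b) :: (b :: l).consecutivePairs := rfl

theorem isChain_iff_forall_mem_consecutivePairs {R : α → α → Prop} {l : List α} :
    l.IsChain R ↔ ∀ x ∈ l.consecutivePairs, R x.1 x.2 := by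
  induction l using twoStepInduction with
  | nil | singleton => simp
  | cons_cons a b l _ ih => simp_all [isChain_cons_cons]

theorem isChain_consecutivePairs (l : List α) :
    l.consecutivePairs.IsChain fun x y => x.2 = y.1 := by
  induction l using twoStepInduction with
  | nil | singleton => simp
  | cons_cons a b l _ ih => cases l <;> simp_all [isChain_cons_cons]

theorem getLast?_consecutivePairs {l : List α} {x : α × α}
    (hx : x ∈ l.consecutivePairs.getLast?) : l.getLast? = some x.2 := by
  induction l using twoStepInduction with
  | nil | singleton => simp at hx
  | cons_cons a b l _ ih =>
    cases l with
    | nil =>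
      obtain rfl : (a, b) = x := by simpa using hx
      rfl
    | cons c l =>
      rw [getLast?_cons_cons]
      refine ih b ?_
      simpa only [consecutivePairs_cons_cons, getLast?_cons_cons] using hx

theorem consecutivePairs_cons_map_snd {M : List (α × α)} {s : α}
    (hM : M.IsChain fun x y => x.2 = y.1) (hs : ∀ x ∈ M.head?, x.1 = s) :
    (s :: M.map Prod.snd).consecutivePairs = M := by
  induction M generalizing s with
  | nil => simp
  | cons x M ih =>
    obtain rfl : x.1 = s := hs x rfl
    simp [ih hM.tail fun y hy => ((isChain_cons.1 hM).1 y hy).symm]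

theorem consecutivePairs_sublist_of_suffix {l₁ l₂ : List α} (h : l₁ <:+ l₂) :
    l₁.consecutivePairs <+ l₂.consecutivePairs := by
  obtain ⟨u, rfl⟩ := h
  induction u with
  | nil => simp
  | cons a u ih =>
    refine ih.trans ?_
    cases h : u ++ l₁ <;> simp [h]

theorem Nodup.consecutivePairs {l : List α} (h : l.Nodup) : l.consecutivePairs.Nodup := by
  refine Nodup.of_map Prod.snd ?_
  rw [map_snd_zip (by simp)]
  exact h.sublist (tail_sublist l)

theorem exists_nodup_shortcut (w : List α) :
    ∃ p, p <+ w ∧ p.Nodup ∧ p.head? = w.head? ∧ p.getLast? = w.getLast? ∧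
      p.consecutivePairs <+ w.consecutivePairs := by
  match w with
  | [] => exact ⟨[], by simp⟩
  | a :: l =>
    by_cases ha : a ∈ l
    · obtain ⟨l₂, l₃, rfl⟩ := append_of_mem ha
      have hsuf : a :: l₃ <:+ a :: (l₂ ++ a :: l₃) := ⟨a :: l₂, by simp⟩
      obtain ⟨p, hpw, hp, hhead, hlast, hpairs⟩ := exists_nodup_shortcut (a :: l₃)
      refine ⟨p, hpw.trans hsuf.sublist, hp, by simpa using hhead, ?_,
        hpairs.trans (consecutivePairs_sublist_of_suffix hsuf)⟩
      rw [hlast, ← cons_append, getLast?_append_of_ne_nil _ (cons_ne_nil a l₃)]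
    · match l with
      | [] => exact ⟨[a], by simp⟩
      | b :: l =>
        obtain ⟨p, hpw, hp, hhead, hlast, hpairs⟩ := exists_nodup_shortcut (b :: l)
        obtain ⟨p, rfl⟩ : ∃ p', p = b :: p' := by
          cases p <;> simp_all
        refine ⟨a :: b :: p, hpw.cons_cons a, nodup_cons.2 ⟨fun h => ha (hpw.subset h), hp⟩,
          rfl, by simpa [getLast?_cons_cons] using hlast, ?_⟩
        simpa using hpairs
termination_by w.length

end List

theorem exists_separating_labelling {ι α : Type*} [Fintype ι] [DecidableEq ι] [BEq α]
    [LawfulBEq α] (S : ι → List α) (cap : α → ℕ)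
    (hS : ∀ a, ∑ j, (S j).count a ≤ cap a) :
    ∃ idx : ι → α → ℕ, (∀ j, ∀ a ∈ S j, idx j a < cap a) ∧
      ∀ j j' a, a ∈ S j → a ∈ S j' → idx j a = idx j' a → j = j' := by
  let users a := Finset.univ.filter fun j => a ∈ S j
  have users_card (a) : (users a).card ≤ cap a :=
    calc (users a).card = ∑ j ∈ users a, 1 := Finset.card_eq_sum_ones _
      _ ≤ ∑ j ∈ users a, (S j).count a :=
        Finset.sum_le_sum fun j hj => List.count_pos_iff.2 (Finset.mem_filter.1 hj).2
      _ ≤ ∑ j, (S j).count a := Finset.sum_le_sum_of_subset (Finset.subset_univ _)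
      _ ≤ cap a := hS a
  have mem_users {j a} (h : a ∈ S j) : j ∈ (users a).toList := by simpa [users] using h
  refine ⟨fun j a => (users a).toList.idxOf j, fun j a h => ?_, fun j j' a h h' hidx => ?_⟩
  · have := List.idxOf_lt_length_iff.2 (mem_users h)
    rw [Finset.length_toList] at this
    exact this.trans_le (users_card a)
  · exact (List.idxOf_inj (mem_users h)).1 hidx

def IsPathBetween {W : Type*} (R : W → W → Prop) (X Y : Set W) (w : List W) : Prop :=
  w ≠ [] ∧ w.IsChain R ∧ w.Nodup ∧ (∀ a, w.head? = some a → a ∈ X) ∧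
    ∀ b, w.getLast? = some b → b ∈ Y

theorem exists_isPathSys_iff {W : Type*} {R : W → W → Prop} {X Y : Set W} {k : ℕ} :
    (∃ P, IsPathSys R X Y k P) ↔
      ∃ w : Fin k → List W, (∀ j, IsPathBetween R X Y (w j)) ∧
        Pairwise fun j j' => ∀ v ∈ w j, v ∉ w j' := by
  constructor
  · rintro ⟨P, hcard, hpaths, hdisj⟩
    let g : Fin k ≃ P := (finCongr hcard.symm).trans P.equivFin.symm
    exact ⟨fun j => g j, fun j => hpaths _ (g j).2,
      fun j j' h => hdisj _ (g j).2 _ (g j').2 fun he => h (g.injective (Subtype.ext he))⟩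
  · rintro ⟨w, hw, hdisj⟩
    have hinj : Function.Injective w := fun j j' h => by
      by_contra hne
      obtain ⟨v, hv⟩ := List.exists_mem_of_ne_nil _ (hw j).1
      exact hdisj hne v hv (h ▸ hv)
    refine ⟨Finset.univ.image w, by rw [Finset.card_image_of_injective _ hinj, Finset.card_fin],
      ?_, ?_⟩
    · simp only [Finset.mem_image, Finset.mem_univ, true_and]
      rintro _ ⟨j, rfl⟩
      exact hw j
    · simp only [Finset.mem_image, Finset.mem_univ, true_and]
      rintro _ ⟨j, rfl⟩ _ ⟨j', rfl⟩ hne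
      exact hdisj fun h => hne (h ▸ rfl)

namespace VStar

variable {k : ℕ}

def src (a : Fin k) : VStar V k := Sum.inr (Sum.inl a)

def sink (b : Fin k) : VStar V k := Sum.inr (Sum.inr b)

def outCopy (p : (V × V) × ℕ) : VStar V k := Sum.inl ((p.1.1, p.1, p.2), true)

def inCopy (p : (V × V) × ℕ) : VStar V k := Sum.inl ((p.1.2, p.1, p.2), false)

def copies (L : List ((V × V) × ℕ)) : List (VStar V k) :=
  L.flatMap fun p => [outCopy p, inCopy p]

end VStar

open VStar

/-- An `s`–`t` walk of `N`, listed by its edges, each edge `e` carrying a slot `i < cap e`: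
what an `X`–`Y` path of `N*` records. -/
def IsSlottedWalk (E : V → V → Prop) (cap : V × V → ℕ) (s t : V)
    (L : List ((V × V) × ℕ)) : Prop :=
  L ≠ [] ∧ L.IsChain (fun p q => p.1.2 = q.1.1) ∧
    (∀ p ∈ L, E p.1.1 p.1.2 ∧ p.2 < cap p.1) ∧
    (∀ p ∈ L.head?, p.1.1 = s) ∧ ∀ p ∈ L.getLast?, p.1.2 = t

section Gadget

variable {E : V → V → Prop} {cap : V × V → ℕ} {s t : V} {k : ℕ}

@[simp] theorem copies_nil : copies ([] : List ((V × V) × ℕ)) = ([] : List (VStar V k)) := rfl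

@[simp] theorem copies_cons (p : (V × V) × ℕ) (L : List ((V × V) × ℕ)) :
    (copies (p :: L) : List (VStar V k)) = outCopy p :: inCopy p :: copies L := rfl

theorem mem_copies {L : List ((V × V) × ℕ)} {u : VStar V k} :
    u ∈ copies L ↔ ∃ p ∈ L, u = outCopy p ∨ u = inCopy p := by
  simp [copies]

theorem outCopy_injective : Function.Injective (outCopy : _ → VStar V k) := by
  rintro ⟨⟨_, _⟩, _⟩ ⟨⟨_, _⟩, _⟩ h
  simp_all [outCopy]

theorem inCopy_injective : Function.Injective (inCopy : _ → VStar V k) := by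
  rintro ⟨⟨_, _⟩, _⟩ ⟨⟨_, _⟩, _⟩ h
  simp_all [inCopy]

theorem nodup_copies {L : List ((V × V) × ℕ)} :
    (copies L : List (VStar V k)).Nodup ↔ L.Nodup := by
  induction L with
  | nil => simp
  | cons p L ih => simp [mem_copies, outCopy, inCopy, Prod.ext_iff, ih]

theorem nodup_src_copies_sink {a b : Fin k} {L : List ((V × V) × ℕ)} :
    (src a :: (copies L ++ [sink b])).Nodup ↔ L.Nodup := by
  simp [List.nodup_append, nodup_copies, mem_copies, src, sink, outCopy, inCopy]

theorem not_EStar_sink (b : Fin k) (y : VStar V k) : ¬ EStar E cap s t k (sink b) y := by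
  rcases y with ⟨_, _ | _⟩ | _ | _ <;> simp [EStar, sink]

theorem eq_inCopy_of_EStar_out {v : V} {e : V × V} {i : ℕ} {z : VStar V k}
    (h : EStar E cap s t k (Sum.inl ((v, e, i), true)) z) : v = e.1 ∧ z = inCopy (e, i) := by
  rcases z with ⟨⟨_, _, _⟩, _ | _⟩ | _ | _ <;> simp [EStar] at h
  obtain ⟨rfl, rfl, rfl, -, rfl, -⟩ := h
  exact ⟨rfl, rfl⟩

theorem EStar_out_or_sink {x y : VStar V k} (hx : x ∈ XStar V k ∨ ∃ q, x = Sum.inl (q, false))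
    (h : EStar E cap s t k x y) : (∃ q, y = Sum.inl (q, true)) ∨ y ∈ YStar V k := by
  rcases hx with ⟨a, rfl⟩ | ⟨q, rfl⟩ <;> rcases y with ⟨_, _ | _⟩ | _ | _ <;>
    simp_all [EStar, YStar]

@[simp] theorem EStar_outCopy_inCopy (p : (V × V) × ℕ) :
    EStar E cap s t k (outCopy p) (inCopy p) ↔ E p.1.1 p.1.2 ∧ p.2 < cap p.1 := by
  simp [EStar, outCopy, inCopy]

@[simp] theorem EStar_inCopy_outCopy (p q : (V × V) × ℕ) :
    EStar E cap s t k (inCopy p) (outCopy q) ↔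
      p.1.2 = q.1.1 ∧ (E p.1.1 p.1.2 ∧ p.2 < cap p.1) ∧ E q.1.1 q.1.2 ∧ q.2 < cap q.1 := by
  simp only [EStar, outCopy, inCopy, true_and]
  tauto

@[simp] theorem EStar_inCopy_sink (p : (V × V) × ℕ) (b : Fin k) :
    EStar E cap s t k (inCopy p) (sink b) ↔ p.1.2 = t ∧ E p.1.1 p.1.2 ∧ p.2 < cap p.1 := by
  simp [EStar, inCopy, sink]

theorem exists_eq_copies_append_sink :
    ∀ (x : VStar V k) (rest : List (VStar V k)),
      (x ∈ XStar V k ∨ ∃ q, x = Sum.inl (q, false)) →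
      (x :: rest).IsChain (EStar E cap s t k) →
      (∀ y ∈ (x :: rest).getLast?, y ∈ YStar V k) → ∃ L b, rest = copies L ++ [sink b]
  | x, [], hx, _, hY => by
    rcases hx with ⟨a, rfl⟩ | ⟨q, rfl⟩ <;> simp [YStar] at hY
  | _, [y], _, _, hY => by
    obtain ⟨b, rfl⟩ := hY y rfl
    exact ⟨[], b, rfl⟩
  | x, y :: z :: rest, hx, hch, hY => by
    rw [List.isChain_cons_cons] at hch
    rcases EStar_out_or_sink hx hch.1 with ⟨⟨v, e, i⟩, rfl⟩ | ⟨b, rfl⟩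
    · obtain ⟨rfl, rfl⟩ := eq_inCopy_of_EStar_out (List.isChain_cons_cons.1 hch.2).1
      obtain ⟨L, b, rfl⟩ := exists_eq_copies_append_sink (inCopy (e, i)) rest
        (Or.inr ⟨_, rfl⟩) hch.2.tail (by simpa only [List.getLast?_cons_cons] using hY)
      exact ⟨(e, i) :: L, b, rfl⟩
    · exact absurd (List.isChain_cons_cons.1 hch.2).1 (not_EStar_sink b _)

theorem isChain_copies_append_sink_iff {L : List ((V × V) × ℕ)} {b : Fin k} :
    (copies L ++ [sink b]).IsChain (EStar E cap s t k) ↔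
      L.IsChain (fun p q => p.1.2 = q.1.1) ∧ (∀ p ∈ L, E p.1.1 p.1.2 ∧ p.2 < cap p.1) ∧
        ∀ p ∈ L.getLast?, p.1.2 = t := by
  induction L with
  | nil => simp
  | cons p L ih =>
    cases L with
    | nil => simp [and_comm]
    | cons q L =>
      simp only [copies_cons, List.cons_append, List.isChain_cons_cons] at ih ⊢
      rw [ih]
      simp only [EStar_outCopy_inCopy, EStar_inCopy_outCopy, List.forall_mem_cons,
        List.getLast?_cons_cons]
      tauto

theorem isChain_src_copies_sink_iff {a b : Fin k} {L : List ((V × V) × ℕ)} :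
    (src a :: (copies L ++ [sink b])).IsChain (EStar E cap s t k) ↔
      IsSlottedWalk E cap s t L := by
  cases L with
  | nil => simp [IsSlottedWalk, EStar, src, sink]
  | cons p L =>
    rw [List.isChain_cons, isChain_copies_append_sink_iff]
    simp [IsSlottedWalk, EStar, src, outCopy, and_assoc, and_left_comm]

theorem isPathBetween_EStar_iff {w : List (VStar V k)} :
    IsPathBetween (EStar E cap s t k) (XStar V k) (YStar V k) w ↔
      ∃ a L b, w = src a :: (copies L ++ [sink b]) ∧ IsSlottedWalk E cap s t L ∧ L.Nodup := by
  constructor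
  · rintro ⟨hne, hch, hnd, hX, hY⟩
    obtain ⟨x, rest, rfl⟩ := List.exists_cons_of_ne_nil hne
    obtain ⟨a, rfl⟩ := hX x rfl
    obtain ⟨L, b, rfl⟩ := exists_eq_copies_append_sink _ rest (Or.inl ⟨a, rfl⟩) hch hY
    exact ⟨a, L, b, rfl, isChain_src_copies_sink_iff.1 hch, nodup_src_copies_sink.1 hnd⟩
  · rintro ⟨a, L, b, rfl, hL, hnd⟩
    refine ⟨List.cons_ne_nil _ _, isChain_src_copies_sink_iff.2 hL,
      nodup_src_copies_sink.2 hnd, fun x hx => ⟨a, ?_⟩, fun y hy => ⟨b, ?_⟩⟩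
    · simpa [src] using hx.symm
    · simpa [sink, List.getLast?_cons, List.getLast?_append] using hy.symm

theorem disjoint_src_copies_sink {a a' : Fin k} (ha : a ≠ a')
    {L L' : List ((V × V) × ℕ)} (hL : ∀ p ∈ L, p ∉ L') :
    ∀ v ∈ (src a :: (copies L ++ [sink a]) : List (VStar V k)),
      v ∉ src a' :: (copies L' ++ [sink a']) := by
  intro v hv hv'
  simp only [List.mem_cons, List.mem_append, mem_copies, List.not_mem_nil, or_false] at hv hv'
  rcases hv with rfl | ⟨p, hp, rfl | rfl⟩ | rfl <;>
    rcases hv' with h | ⟨q, hq, h | h⟩ | h <;>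
    first
      | exact hL p hp (outCopy_injective h ▸ hq)
      | exact hL p hp (inCopy_injective h ▸ hq)
      | simp_all [src, sink, outCopy, inCopy]

end Gadget

def IsSimplePath (E : V → V → Prop) (s t : V) (p : List V) : Prop :=
  p ≠ [] ∧ p.IsChain E ∧ p.Nodup ∧ p.head? = some s ∧ p.getLast? = some t

section Walks

variable {E : V → V → Prop} {cap : V × V → ℕ} {s t : V} {k : ℕ}

theorem isSlottedWalk_map_consecutivePairs {W : List V} (hW : W.IsChain E) (hs : W.head? = some s)
    (ht : W.getLast? = some t) (hst : s ≠ t) {f : V × V → ℕ}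
    (hf : ∀ e ∈ W.consecutivePairs, f e < cap e) :
    IsSlottedWalk E cap s t (W.consecutivePairs.map fun e => (e, f e)) := by
  obtain ⟨a, b, rest, rfl⟩ : ∃ a b rest, W = a :: b :: rest := by
    rcases W with _ | ⟨a, _ | ⟨b, rest⟩⟩
    · simp at hs
    · simp_all
    · exact ⟨a, b, rest, rfl⟩
  refine ⟨by simp, (List.isChain_map _).2 (List.isChain_consecutivePairs _), ?_, ?_, ?_⟩
  · simp only [List.mem_map]
    rintro _ ⟨e, he, rfl⟩
    exact ⟨List.isChain_iff_forall_mem_consecutivePairs.1 hW e he, hf e he⟩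
  · simpa using hs
  · simp only [List.getLast?_map, Option.mem_def, Option.map_eq_some_iff]
    rintro _ ⟨e, he, rfl⟩
    simpa [ht] using (List.getLast?_consecutivePairs he).symm

theorem exists_isSimplePath_of_isSlottedWalk {L : List ((V × V) × ℕ)}
    (hL : IsSlottedWalk E cap s t L) :
    ∃ p, IsSimplePath E s t p ∧ p.consecutivePairs.Sublist (L.map Prod.fst) := by
  obtain ⟨hne, hch, hval, hs, ht⟩ := hL
  set W := s :: (L.map Prod.fst).map Prod.snd
  have hWpairs : W.consecutivePairs = L.map Prod.fst :=
    List.consecutivePairs_cons_map_snd ((List.isChain_map _).2 hch) (by simpa using hs)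
  have hWt : W.getLast? = some t := by
    obtain ⟨p, hp⟩ := Option.ne_none_iff_exists'.1 (List.getLast?_eq_none_iff.not.2 hne)
    simp [W, List.getLast?_cons, List.getLast?_map, hp, ht p hp]
  obtain ⟨p, -, hnd, hhead, hlast, hpairs⟩ := List.exists_nodup_shortcut W
  rw [hWpairs] at hpairs
  refine ⟨p, ⟨?_, ?_, hnd, hhead, hlast.trans hWt⟩, hpairs⟩
  · rintro rfl
    simp [W] at hhead
  · refine List.isChain_iff_forall_mem_consecutivePairs.2 fun x hx => ?_
    obtain ⟨q, hq, rfl⟩ := List.mem_map.1 (hpairs.subset hx)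
    exact (hval q hq).1

def liftPath {k : ℕ} (j : Fin k) (W : List V) (f : V × V → ℕ) : List (VStar V k) :=
  src j :: (copies (W.consecutivePairs.map fun e => (e, f e)) ++ [sink j])

theorem isPathBetween_liftPath {W : List V} (hW : IsSimplePath E s t W) (hst : s ≠ t)
    {f : V × V → ℕ} (hf : ∀ e ∈ W.consecutivePairs, f e < cap e) (j : Fin k) :
    IsPathBetween (EStar E cap s t k) (XStar V k) (YStar V k) (liftPath j W f) := by
  obtain ⟨-, hch, hnd, hs, ht⟩ := hW
  refine isPathBetween_EStar_iff.2
    ⟨j, _, j, rfl, isSlottedWalk_map_consecutivePairs hch hs ht hst hf, ?_⟩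
  exact hnd.consecutivePairs.map fun _ _ h => congrArg Prod.fst h

theorem disjoint_liftPath {j j' : Fin k} (hjj' : j ≠ j') {W W' : List V} {f f' : V × V → ℕ}
    (hsep : ∀ e ∈ W.consecutivePairs, e ∈ W'.consecutivePairs → f e ≠ f' e) :
    ∀ v ∈ liftPath j W f, v ∉ liftPath j' W' f' := by
  refine disjoint_src_copies_sink hjj' ?_
  simp only [List.mem_map, not_exists, not_and]
  rintro _ ⟨e, he, rfl⟩ e' he' h
  obtain ⟨rfl, h⟩ := Prod.mk.inj h
  exact hsep _ he he' h.symm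

end Walks

def inCopyIndices {k : ℕ} (cap : V × V → ℕ) (e : V × V) (w : List (VStar V k)) :
    Finset ℕ :=
  (Finset.range (cap e)).filter fun i => inCopy (e, i) ∈ w

section Counting

variable {cap : V × V → ℕ} {k : ℕ}

theorem count_map_fst_le_card_inCopyIndices [DecidableEq V] {L : List ((V × V) × ℕ)}
    (hcap : ∀ p ∈ L, p.2 < cap p.1) (hnd : L.Nodup) {w : List (VStar V k)}
    (hw : ∀ p ∈ L, inCopy p ∈ w) (e : V × V) :
    (L.map Prod.fst).count e ≤ (inCopyIndices cap e w).card := by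
  set M := L.filter fun p => p.1 == e
  have hM : (M.map Prod.snd).Nodup :=
    (hnd.filter _).map_on fun x hx y hy h => Prod.ext (by simp_all [M]) h
  calc (L.map Prod.fst).count e = (M.map Prod.snd).toFinset.card := by
        rw [List.toFinset_card_of_nodup hM, List.length_map, List.count_eq_countP,
          List.countP_map, List.countP_eq_length_filter]
        simp [M, Function.comp_def]
    _ ≤ (inCopyIndices cap e w).card := by
        refine Finset.card_le_card fun i hi => ?_
        obtain ⟨p, hp, rfl⟩ := List.mem_map.1 (List.mem_toFinset.1 hi)
        obtain ⟨hpL, hpe⟩ := List.mem_filter.1 hp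
        obtain rfl : p.1 = e := beq_iff_eq.1 hpe
        exact Finset.mem_filter.2 ⟨Finset.mem_range.2 (hcap p hpL), hw p hpL⟩

theorem sum_card_inCopyIndices_le {ι : Type*} [Fintype ι] {w : ι → List (VStar V k)}
    (hw : Pairwise fun j j' => ∀ v ∈ w j, v ∉ w j') (e : V × V) :
    ∑ j, (inCopyIndices cap e (w j)).card ≤ cap e := by
  rw [← Finset.card_biUnion]
  · calc _ ≤ (Finset.range (cap e)).card :=
          Finset.card_le_card (Finset.biUnion_subset.2 fun j _ => Finset.filter_subset _ _)
      _ = cap e := Finset.card_range _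
  · intro j _ j' _ hjj'
    refine Finset.disjoint_left.2 fun i hi hi' => ?_
    exact hw hjj' _ (Finset.mem_filter.1 hi).2 (Finset.mem_filter.1 hi').2

theorem exists_isSimplePath_count_le [DecidableEq V] {E : V → V → Prop} {s t : V}
    {w : List (VStar V k)} (hw : IsPathBetween (EStar E cap s t k) (XStar V k) (YStar V k) w) :
    ∃ p, IsSimplePath E s t p ∧
      ∀ e, p.consecutivePairs.count e ≤ (inCopyIndices cap e w).card := by
  obtain ⟨a, L, b, rfl, hL, hnd⟩ := isPathBetween_EStar_iff.1 hw
  obtain ⟨p, hp, hpairs⟩ := exists_isSimplePath_of_isSlottedWalk hL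
  refine ⟨p, hp, fun e => (hpairs.count_le e).trans <|
    count_map_fst_le_card_inCopyIndices (fun q hq => (hL.2.2.1 q hq).2) hnd (fun q hq => ?_) e⟩
  exact List.mem_cons_of_mem _ (List.mem_append_left _ (mem_copies.2 ⟨q, hq, Or.inr rfl⟩))

end Counting

theorem flow_iff_disjoint_paths_general [DecidableEq V]
    (k : ℕ) (E : V → V → Prop) (cap : V × V → ℕ)
    (s t : V) (hst : s ≠ t) :
    (∃ Fl : Fin k → List V,
      (∀ j, Fl j ≠ [] ∧ (Fl j).Chain' E ∧ (Fl j).Nodup ∧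
        (Fl j).head? = some s ∧ (Fl j).getLast? = some t) ∧
      (∀ e : V × V, (∑ j, ((Fl j).zip (Fl j).tail).count e) ≤ cap e)) ↔
    (∃ P : Finset (List (VStar V k)),
      IsPathSys (EStar E cap s t k) (XStar V k) (YStar V k) k P) := by
  rw [exists_isPathSys_iff]
  constructor
  · rintro ⟨Fl, hFl, hload⟩
    obtain ⟨idx, hidx, hsep⟩ :=
      exists_separating_labelling (fun j => (Fl j).consecutivePairs) cap hload
    exact ⟨fun j => liftPath j (Fl j) (idx j),
      fun j => isPathBetween_liftPath (hFl j) hst (hidx j) j,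
      fun j j' hjj' => disjoint_liftPath hjj' fun e he he' h => hjj' (hsep j j' e he he' h)⟩
  · rintro ⟨w, hw, hdisj⟩
    choose Fl hFl hcount using fun j => exists_isSimplePath_count_le (hw j)
    exact ⟨Fl, hFl, fun e =>
      (Finset.sum_le_sum fun j _ => hcount j e).trans (sum_card_inCopyIndices_le hdisj e)⟩

/-- **Flow-to-disjoint-paths reduction.**  In a network `N` with edge
capacities `cap ≤ k`, there is a proper integral flow of value `k` from `s` to
`t` (i.e. `k` simple `s`–`t` paths using each edge at most its capacity many
times in total) iff there are `k` pairwise vertex-disjoint simple directed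
paths connecting `XStar` to `YStar` in the gadget network `N*`. -/
theorem flow_iff_disjoint_paths [DecidableEq V]
    (k : ℕ) (E : V → V → Prop) (cap : V × V → ℕ) (hcap : ∀ e, cap e ≤ k)
    (s t : V) (hst : s ≠ t) :
    (∃ Fl : Fin k → List V,
      (∀ j, Fl j ≠ [] ∧ (Fl j).Chain' E ∧ (Fl j).Nodup ∧
        (Fl j).head? = some s ∧ (Fl j).getLast? = some t) ∧
      (∀ e : V × V, (∑ j, ((Fl j).zip (Fl j).tail).count e) ≤ cap e)) ↔
    (∃ P : Finset (List (VStar V k)),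
      IsPathSys (EStar E cap s t k) (XStar V k) (YStar V k) k P) :=
  flow_iff_disjoint_paths_general k E cap s t hst
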